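/- arXiv:2403.09532 — 2 statements merged into one kernel-verified Lean document; each statement's English description precedes it below -/
import Mathlib

section
/- Let U : ℝ^m × ℝ^m → ℝ be defined by U(θ, x) = |y − σ(⟨w,z⟩ + b)|², where θ = (w,b) ∈ ℝ^{m−1} × ℝ, x = (z,y) ∈ ℝ^{m−1} × ℝ, and σ(t) = 1/(1+e^{−t}). Then for all θ, θ̄ ∈ ℝ^m and x ∈ Ξ: |∇_θ U(θ,x) − ∇_θ U(θ̄,x)| ≤ 6m(1+|x|)³|θ − θ̄|, and |∇_θ U(θ,x)| ≤ 2m(1+|x|)³. -/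
noncomputable def sig (t : ℝ) : ℝ := (1 + Real.exp (-t))⁻¹

lemma sig_pos (t : ℝ) : 0 < sig t := by
  have := Real.exp_pos (-t); unfold sig; positivity

lemma sig_lt_one (t : ℝ) : sig t < 1 := by
  have hmul : sig t * (1 + Real.exp (-t)) = 1 := by
    rw [sig]; field_simp
  nlinarith [sig_pos t, Real.exp_pos (-t)]

lemma sig_hasDerivAt (t : ℝ) : HasDerivAt sig (sig t * (1 - sig t)) t := by
  have he : (1 : ℝ) + Real.exp (-t) ≠ 0 := by positivity
  have h1 : HasDerivAt (fun t : ℝ => 1 + Real.exp (-t)) (-Real.exp (-t)) t := by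
    have := ((hasDerivAt_id t).neg.exp).const_add (1 : ℝ)
    simpa using this
  have h2 := h1.inv he
  refine (show HasDerivAt sig _ t from h2).congr_deriv ?_
  unfold sig
  field_simp
  ring

lemma sig_lip (s t : ℝ) : |sig s - sig t| ≤ |s - t| := by
  have := Convex.norm_image_sub_le_of_norm_hasDerivWithin_le
    (f := sig) (f' := fun u => sig u * (1 - sig u)) (C := 1)
    (fun u _ => (sig_hasDerivAt u).hasDerivWithinAt)
    (fun u _ => by
      have h1 := sig_pos u; have h2 := sig_lt_one u
      have h3 : ‖sig u * (1 - sig u)‖ ≤ 1 := by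
        rw [Real.norm_eq_abs, abs_of_nonneg (by nlinarith)]; nlinarith
      simpa using h3)
    convex_univ (Set.mem_univ t) (Set.mem_univ s)
  simpa [Real.norm_eq_abs] using this

lemma sig'_lip (s t : ℝ) :
    |sig s * (1 - sig s) - sig t * (1 - sig t)| ≤ |s - t| := by
  have key : sig s * (1 - sig s) - sig t * (1 - sig t)
      = (sig s - sig t) * (1 - sig s - sig t) := by ring
  rw [key, abs_mul]
  have h1 := sig_pos s; have h2 := sig_lt_one s
  have h3 := sig_pos t; have h4 := sig_lt_one t
  have hb : |1 - sig s - sig t| ≤ 1 := by rw [abs_le]; constructor <;> nlinarith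
  calc |sig s - sig t| * |1 - sig s - sig t| ≤ |s - t| * 1 :=
        mul_le_mul (sig_lip s t) hb (abs_nonneg _) (abs_nonneg _)
    _ = |s - t| := mul_one _

lemma le_of_sq_le_sq' {a b : ℝ} (h : a ^ 2 ≤ b ^ 2) (hb : 0 ≤ b) : a ≤ b := by
  nlinarith [sq_nonneg (a - b), sq_nonneg (a + b)]

set_option maxHeartbeats 2000000 in
/-- Gradient Lipschitz and growth bounds for the regression loss
U(θ,x) = |y − σ(⟨w,z⟩+b)|², θ = (w,b), x = (z,y), with m = k+1. -/
theorem stmt_10 (k : ℕ)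
    (Ξ : Set (WithLp 2 (EuclideanSpace ℝ (Fin k) × ℝ)))
    (hcomp : IsCompact Ξ)
    (U : WithLp 2 (EuclideanSpace ℝ (Fin k) × ℝ) →
      WithLp 2 (EuclideanSpace ℝ (Fin k) × ℝ) → ℝ)
    (hU : ∀ θ x, U θ x =
      ((WithLp.equiv 2 (EuclideanSpace ℝ (Fin k) × ℝ) x).2 -
        (1 + Real.exp (-((inner ℝ
              (WithLp.equiv 2 (EuclideanSpace ℝ (Fin k) × ℝ) θ).1
              (WithLp.equiv 2 (EuclideanSpace ℝ (Fin k) × ℝ) x).1 : ℝ) +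
            (WithLp.equiv 2 (EuclideanSpace ℝ (Fin k) × ℝ) θ).2)))⁻¹) ^ 2) :
    ∀ θ θ' : WithLp 2 (EuclideanSpace ℝ (Fin k) × ℝ), ∀ x ∈ Ξ,
      ‖fderiv ℝ (fun θ'' => U θ'' x) θ - fderiv ℝ (fun θ'' => U θ'' x) θ'‖ ≤
          6 * ((k : ℝ) + 1) * (1 + ‖x‖) ^ 3 * ‖θ - θ'‖ ∧
        ‖fderiv ℝ (fun θ'' => U θ'' x) θ‖ ≤ 2 * ((k : ℝ) + 1) * (1 + ‖x‖) ^ 3 := by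
  intro θ θ' x _
  set v : WithLp 2 (EuclideanSpace ℝ (Fin k) × ℝ) := (WithLp.equiv 2 (EuclideanSpace ℝ (Fin k) × ℝ)).symm
      ((WithLp.equiv 2 (EuclideanSpace ℝ (Fin k) × ℝ) x).1, 1) with hv
  set c : ℝ := (WithLp.equiv 2 (EuclideanSpace ℝ (Fin k) × ℝ) x).2 with hc
  have hinner : ∀ θ'' : WithLp 2 (EuclideanSpace ℝ (Fin k) × ℝ),
      (inner ℝ v θ'' : ℝ) = (inner ℝ
          (WithLp.equiv 2 (EuclideanSpace ℝ (Fin k) × ℝ) θ'').1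
          (WithLp.equiv 2 (EuclideanSpace ℝ (Fin k) × ℝ) x).1 : ℝ) +
        (WithLp.equiv 2 (EuclideanSpace ℝ (Fin k) × ℝ) θ'').2 := by
    intro θ''
    rw [WithLp.prod_inner_apply]
    have h1 : (inner ℝ v.fst θ''.fst : ℝ) = (inner ℝ
        (WithLp.equiv 2 (EuclideanSpace ℝ (Fin k) × ℝ) θ'').1
        (WithLp.equiv 2 (EuclideanSpace ℝ (Fin k) × ℝ) x).1 : ℝ) := real_inner_comm _ _
    have h2 : (inner ℝ v.snd θ''.snd : ℝ) =
        (WithLp.equiv 2 (EuclideanSpace ℝ (Fin k) × ℝ) θ'').2 := by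
      show (inner ℝ (1 : ℝ) θ''.snd : ℝ) = θ''.snd
      simp [real_inner_comm]
    exact congrArg₂ (· + ·) h1 h2
  have hform : (fun θ'' : WithLp 2 (EuclideanSpace ℝ (Fin k) × ℝ) => U θ'' x)
      = (fun u : ℝ => (c - sig u) ^ 2) ∘
      (fun θ'' : WithLp 2 (EuclideanSpace ℝ (Fin k) × ℝ) => (inner ℝ v θ'' : ℝ)) := by
    funext θ''
    simp only [Function.comp, hU, hinner, sig, hc]
  have hg : ∀ u : ℝ, HasDerivAt (fun u : ℝ => (c - sig u) ^ 2)
      (-(2 * (c - sig u) * (sig u * (1 - sig u)))) u := by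
    intro u
    have := ((hasDerivAt_const u c).sub (sig_hasDerivAt u)).pow 2
    exact this.congr_deriv (by simp only [Pi.sub_apply]; ring)
  have hD : ∀ ϑ : WithLp 2 (EuclideanSpace ℝ (Fin k) × ℝ), HasFDerivAt (fun θ'' : WithLp 2 (EuclideanSpace ℝ (Fin k) × ℝ) => U θ'' x)
      ((-(2 * (c - sig (inner ℝ v ϑ : ℝ)) *
        (sig (inner ℝ v ϑ : ℝ) * (1 - sig (inner ℝ v ϑ : ℝ))))) • (innerSL ℝ v)) ϑ := by
    intro ϑ
    rw [hform]
    exact (hg _).comp_hasFDerivAt ϑ (innerSL ℝ v).hasFDerivAt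
  have hfd : ∀ ϑ : WithLp 2 (EuclideanSpace ℝ (Fin k) × ℝ), fderiv ℝ (fun θ'' : WithLp 2 (EuclideanSpace ℝ (Fin k) × ℝ) => U θ'' x) ϑ =
      (-(2 * (c - sig (inner ℝ v ϑ : ℝ)) *
        (sig (inner ℝ v ϑ : ℝ) * (1 - sig (inner ℝ v ϑ : ℝ))))) • (innerSL ℝ v) := by
    haveI : ContinuousSMul ℝ (WithLp 2 (EuclideanSpace ℝ (Fin k) × ℝ)) := IsBoundedSMul.continuousSMul
    exact fun ϑ => (hD ϑ).fderiv
  have hxsq := WithLp.prod_norm_sq_eq_of_L2 x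
  have hx2 : |c| ≤ ‖x‖ := by
    have h2 : |c| ^ 2 ≤ ‖x‖ ^ 2 := by
      rw [hxsq]
      have : |c| = ‖x.snd‖ := rfl
      rw [this]
      nlinarith [sq_nonneg ‖x.fst‖]
    exact le_of_sq_le_sq' h2 (norm_nonneg x)
  have hvnorm : ‖v‖ ≤ 1 + ‖x‖ := by
    have h := WithLp.prod_norm_sq_eq_of_L2 v
    have hx1 : ‖x.fst‖ ≤ ‖x‖ := by
      refine le_of_sq_le_sq' ?_ (norm_nonneg x)
      rw [hxsq]; nlinarith [sq_nonneg ‖x.snd‖]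
    refine le_of_sq_le_sq' ?_ (by positivity)
    rw [h]
    have hv1 : ‖v.fst‖ = ‖x.fst‖ := rfl
    have hv2 : ‖v.snd‖ = ‖(1 : ℝ)‖ := rfl
    rw [hv1, hv2, norm_one]
    nlinarith [norm_nonneg x.fst, norm_nonneg x]
  set s : ℝ := (inner ℝ v θ : ℝ) with hs
  set t : ℝ := (inner ℝ v θ' : ℝ) with ht
  set a : ℝ := -(2 * (c - sig s) * (sig s * (1 - sig s))) with ha
  set a' : ℝ := -(2 * (c - sig t) * (sig t * (1 - sig t))) with ha'
  have hst : |s - t| ≤ (1 + ‖x‖) * ‖θ - θ'‖ := by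
    have : s - t = (inner ℝ v (θ - θ') : ℝ) := by
      rw [hs, ht, inner_sub_right]
    rw [this]
    calc |(inner ℝ v (θ - θ') : ℝ)| ≤ ‖v‖ * ‖θ - θ'‖ := by
          simpa using abs_real_inner_le_norm v (θ - θ')
      _ ≤ (1 + ‖x‖) * ‖θ - θ'‖ :=
          mul_le_mul_of_nonneg_right hvnorm (norm_nonneg _)
  have hX : (0 : ℝ) ≤ ‖x‖ := norm_nonneg x
  have hK : (0 : ℝ) ≤ (k : ℝ) := Nat.cast_nonneg k
  have hs1 := sig_pos s; have hs2 := sig_lt_one s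
  have ht1 := sig_pos t; have ht2 := sig_lt_one t
  constructor
  · rw [hfd θ, hfd θ', ← sub_smul, norm_smul, Real.norm_eq_abs, innerSL_apply_norm]
    have hdiff : a - a' = -(2 * (c - sig s)) * (sig s * (1 - sig s) - sig t * (1 - sig t))
        + 2 * (sig s - sig t) * (sig t * (1 - sig t)) := by
      rw [ha, ha']; ring
    have haa : |a - a'| ≤ (2 * ‖x‖ + 4) * |s - t| := by
      rw [hdiff]
      calc |(-(2 * (c - sig s)) * (sig s * (1 - sig s) - sig t * (1 - sig t))
            + 2 * (sig s - sig t) * (sig t * (1 - sig t)))|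
          ≤ |(-(2 * (c - sig s)))| * |sig s * (1 - sig s) - sig t * (1 - sig t)|
            + |2 * (sig s - sig t)| * |sig t * (1 - sig t)| := by
            refine (abs_add_le _ _).trans ?_
            rw [abs_mul, abs_mul]
        _ ≤ (2 * ‖x‖ + 2) * |s - t| + (2 * |s - t|) * 1 := by
            have h1 : |(-(2 * (c - sig s)))| ≤ 2 * ‖x‖ + 2 := by
              rw [abs_neg, abs_mul]
              have : |c - sig s| ≤ ‖x‖ + 1 := by
                refine (abs_sub _ _).trans ?_
                have : |sig s| ≤ 1 := by rw [abs_of_pos hs1]; linarith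
                linarith [hx2]
              rw [abs_of_nonneg (by norm_num : (0:ℝ) ≤ 2)]
              linarith [mul_le_mul_of_nonneg_left this (by norm_num : (0:ℝ) ≤ 2)]
            have h2 := sig'_lip s t
            have h3 : |2 * (sig s - sig t)| ≤ 2 * |s - t| := by
              rw [abs_mul, abs_of_nonneg (by norm_num : (0:ℝ) ≤ 2)]
              exact mul_le_mul_of_nonneg_left (sig_lip s t) (by norm_num)
            have h4 : |sig t * (1 - sig t)| ≤ 1 := by
              rw [abs_of_nonneg (by nlinarith)]; nlinarith
            have := mul_le_mul h1 h2 (abs_nonneg _) (by positivity)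
            have := mul_le_mul h3 h4 (abs_nonneg _) (by positivity)
            nlinarith [abs_nonneg (s - t), abs_nonneg (sig s * (1 - sig s) - sig t * (1 - sig t)), abs_nonneg (sig t * (1 - sig t)), abs_nonneg (2 * (sig s - sig t)), abs_nonneg (-(2 * (c - sig s)))]
        _ = (2 * ‖x‖ + 4) * |s - t| := by ring
    calc |a - a'| * ‖v‖ ≤ ((2 * ‖x‖ + 4) * ((1 + ‖x‖) * ‖θ - θ'‖)) * (1 + ‖x‖) := by
          refine mul_le_mul ?_ hvnorm (norm_nonneg v) (by positivity)
          exact haa.trans (mul_le_mul_of_nonneg_left hst (by positivity))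
      _ ≤ (6 * ((k : ℝ) + 1) * (1 + ‖x‖)) * ((1 + ‖x‖) * ‖θ - θ'‖) * (1 + ‖x‖) := by
          have h6 : 2 * ‖x‖ + 4 ≤ 6 * ((k : ℝ) + 1) * (1 + ‖x‖) := by
            nlinarith [mul_nonneg hK (by linarith : (0:ℝ) ≤ 1 + ‖x‖)]
          exact mul_le_mul_of_nonneg_right
            (mul_le_mul_of_nonneg_right h6 (by positivity)) (by positivity)
      _ = 6 * ((k : ℝ) + 1) * (1 + ‖x‖) ^ 3 * ‖θ - θ'‖ := by ring
  · rw [hfd θ, norm_smul, Real.norm_eq_abs, innerSL_apply_norm]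
    have haabs : |a| ≤ 2 * (‖x‖ + 1) := by
      rw [ha, abs_neg, abs_mul, abs_mul]
      have h1 : |c - sig s| ≤ ‖x‖ + 1 := by
        refine (abs_sub _ _).trans ?_
        have : |sig s| ≤ 1 := by rw [abs_of_pos hs1]; linarith
        linarith [hx2]
      have h2 : |sig s * (1 - sig s)| ≤ 1 := by
        rw [abs_of_nonneg (by nlinarith)]; nlinarith
      rw [abs_of_nonneg (by norm_num : (0:ℝ) ≤ 2)]
      nlinarith [abs_nonneg (c - sig s)]
    calc |a| * ‖v‖ ≤ (2 * (‖x‖ + 1)) * (1 + ‖x‖) :=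
          mul_le_mul haabs hvnorm (norm_nonneg v) (by positivity)
      _ ≤ 2 * ((k : ℝ) + 1) * (1 + ‖x‖) ^ 3 := by
          have h7 : (1 + ‖x‖) ^ 2 ≤ (1 + ‖x‖) ^ 3 :=
            pow_le_pow_right₀ (by linarith) (by norm_num)
          have h8 : (1 + ‖x‖) ^ 3 ≤ ((k : ℝ) + 1) * (1 + ‖x‖) ^ 3 :=
            le_mul_of_one_le_left (by positivity) (by linarith)
          nlinarith [h7, h8]
end

section
/- Under the setting of the smoothed softmax objective, with Ṽ^δ(θ,α,x) := V^δ(θ,α,x) + (η₁/2)|θ|² + (η₂/2)ι(α)², the full gradient satisfies the dissipativity condition: ⟨(θ,α), ∇_{(θ,α)} Ṽ^δ(θ,α,x)⟩ ≥ a|(θ,α)|² − b for all (θ,α) ∈ ℝ^{d+1} and x ∈ Ξ, with a = min{η₁, η₂a_ι}/2 and b = η₂b_ι + 2(K(1+M)^ν + 2^p M^p)²/min{η₁, η₂a_ι}. -/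
set_option maxHeartbeats 1000000 in
/-- Dissipativity of the gradient of the regularised smoothed objective Ṽ^δ. -/
theorem stmt_15 {d m : ℕ} (p M K : ℝ) (hp : 1 ≤ p) (hK : 0 < K) (hM : 0 ≤ M) (ν : ℕ)
    (η₁ η₂ aι bι : ℝ) (hη₁ : 0 < η₁) (hη₂ : 0 < η₂) (haι : 0 < aι) (hbι : 0 < bι)
    (hdiss : ∀ α : ℝ, aι * α ^ 2 - bι ≤ α * Real.log (Real.cosh α) * Real.tanh α)
    (Ξ : Set (EuclideanSpace ℝ (Fin m)))
    (V : WithLp 2 (EuclideanSpace ℝ (Fin d) × ℝ) → EuclideanSpace ℝ (Fin m) → ℝ)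
    (hdiff : ∀ x ∈ Ξ, Differentiable ℝ (fun z => V z x))
    (hbound : ∀ (z : WithLp 2 (EuclideanSpace ℝ (Fin d) × ℝ)), ∀ x ∈ Ξ,
      ‖fderiv ℝ (fun z' => V z' x) z‖ ≤ K * (1 + M) ^ ν + (2 : ℝ) ^ p * M ^ p) :
    ∀ (z : WithLp 2 (EuclideanSpace ℝ (Fin d) × ℝ)), ∀ x ∈ Ξ,
      min η₁ (η₂ * aι) / 2 * ‖z‖ ^ 2 -
          (η₂ * bι +
            2 * (K * (1 + M) ^ ν + (2 : ℝ) ^ p * M ^ p) ^ 2 / min η₁ (η₂ * aι)) ≤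
        fderiv ℝ (fun z' => V z' x +
            η₁ / 2 * ‖(WithLp.equiv 2 (EuclideanSpace ℝ (Fin d) × ℝ) z').1‖ ^ 2 +
            η₂ / 2 *
              Real.log (Real.cosh
                (WithLp.equiv 2 (EuclideanSpace ℝ (Fin d) × ℝ) z').2) ^ 2) z z := by
  intro z x hx
  have _hE : True := trivial
  set C := K * (1 + M) ^ ν + (2 : ℝ) ^ p * M ^ p with hCdef
  set c := min η₁ (η₂ * aι) with hcdef
  have hc : 0 < c := lt_min hη₁ (mul_pos hη₂ haι)
  have hC : 0 < C := by
    have h1 : (0:ℝ) < K * (1 + M) ^ ν := mul_pos hK (pow_pos (by linarith) ν)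
    have h2 : (0:ℝ) ≤ (2 : ℝ) ^ p * M ^ p :=
      mul_nonneg (Real.rpow_nonneg (by norm_num) p) (Real.rpow_nonneg hM p)
    linarith
  -- continuous linear projections
  set Lfst : WithLp 2 (EuclideanSpace ℝ (Fin d) × ℝ) →L[ℝ] EuclideanSpace ℝ (Fin d) :=
    (ContinuousLinearMap.fst ℝ (EuclideanSpace ℝ (Fin d)) ℝ).comp
      (WithLp.prodContinuousLinearEquiv 2 ℝ (EuclideanSpace ℝ (Fin d)) ℝ : WithLp 2 (EuclideanSpace ℝ (Fin d) × ℝ) →L[ℝ] EuclideanSpace ℝ (Fin d) × ℝ) with hLfst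
  set Lsnd : WithLp 2 (EuclideanSpace ℝ (Fin d) × ℝ) →L[ℝ] ℝ :=
    (ContinuousLinearMap.snd ℝ (EuclideanSpace ℝ (Fin d)) ℝ).comp
      (WithLp.prodContinuousLinearEquiv 2 ℝ (EuclideanSpace ℝ (Fin d)) ℝ : WithLp 2 (EuclideanSpace ℝ (Fin d) × ℝ) →L[ℝ] EuclideanSpace ℝ (Fin d) × ℝ) with hLsnd
  set θ : EuclideanSpace ℝ (Fin d) := Lfst z with hθ
  set α : ℝ := Lsnd z with hα
  have hV : HasFDerivAt (fun z' => V z' x) (fderiv ℝ (fun z' => V z' x) z) z :=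
    ((hdiff x hx) z).hasFDerivAt
  have h1 : HasFDerivAt (fun z' : WithLp 2 (EuclideanSpace ℝ (Fin d) × ℝ) => η₁ / 2 * ‖Lfst z'‖ ^ 2)
      ((η₁ / 2) • (2 • (innerSL ℝ θ).comp Lfst)) z :=
    (Lfst.hasFDerivAt.norm_sq).const_mul (η₁ / 2)
  have hcosh : ∀ a : ℝ, HasDerivAt (fun a : ℝ => Real.log (Real.cosh a) ^ 2)
      (2 * Real.log (Real.cosh a) * Real.tanh a) a := by
    intro a
    have h := ((Real.hasDerivAt_cosh a).log (Real.cosh_pos a).ne').pow 2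
    simp only [Nat.cast_ofNat, pow_one] at h
    refine HasDerivAt.congr_deriv (f := fun a : ℝ => Real.log (Real.cosh a) ^ 2) h ?_
    rw [Real.tanh_eq_sinh_div_cosh]
    norm_num
  have h2 : HasFDerivAt
      (fun z' : WithLp 2 (EuclideanSpace ℝ (Fin d) × ℝ) => η₂ / 2 * Real.log (Real.cosh (Lsnd z')) ^ 2)
      ((η₂ / 2) • ((2 * Real.log (Real.cosh α) * Real.tanh α) • Lsnd)) z :=
    (((hcosh α).comp_hasFDerivAt z Lsnd.hasFDerivAt)).const_mul (η₂ / 2)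
  have H : HasFDerivAt (fun z' => V z' x +
      η₁ / 2 * ‖(WithLp.equiv 2 (EuclideanSpace ℝ (Fin d) × ℝ) z').1‖ ^ 2 +
      η₂ / 2 * Real.log (Real.cosh ((WithLp.equiv 2 (EuclideanSpace ℝ (Fin d) × ℝ) z').2)) ^ 2)
      (fderiv ℝ (fun z' => V z' x) z + (η₁ / 2) • (2 • (innerSL ℝ θ).comp Lfst)
        + (η₂ / 2) • ((2 * Real.log (Real.cosh α) * Real.tanh α) • Lsnd)) z :=
    (hV.add h1).add h2
  haveI : ContinuousSMul ℝ (WithLp 2 (EuclideanSpace ℝ (Fin d) × ℝ)) := IsBoundedSMul.continuousSMul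
  rw [H.fderiv]
  have heval : (fderiv ℝ (fun z' => V z' x) z + (η₁ / 2) • (2 • (innerSL ℝ θ).comp Lfst)
        + (η₂ / 2) • ((2 * Real.log (Real.cosh α) * Real.tanh α) • Lsnd)) z
      = fderiv ℝ (fun z' => V z' x) z z + η₁ * ‖θ‖ ^ 2
        + η₂ * (Real.log (Real.cosh α) * Real.tanh α * α) := by
    simp only [ContinuousLinearMap.add_apply, ContinuousLinearMap.smul_apply, smul_eq_mul,
      ContinuousLinearMap.coe_smul', Pi.smul_apply, innerSL_apply_apply, ContinuousLinearMap.comp_apply,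
      ← hθ, ← hα, real_inner_self_eq_norm_sq]
    ring
  rw [heval]
  -- bound the V-part
  have hDV : -(C * ‖z‖) ≤ fderiv ℝ (fun z' => V z' x) z z := by
    have h1 := (fderiv ℝ (fun z' => V z' x) z).le_opNorm z
    have h2 : ‖fderiv ℝ (fun z' => V z' x) z‖ * ‖z‖ ≤ C * ‖z‖ :=
      mul_le_mul_of_nonneg_right (hbound z x hx) (norm_nonneg z)
    have : |fderiv ℝ (fun z' => V z' x) z z| ≤ C * ‖z‖ := by
      rw [← Real.norm_eq_abs]; exact h1.trans h2
    linarith [neg_abs_le (fderiv ℝ (fun z' => V z' x) z z), this]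
  have hnorm : ‖z‖ ^ 2 = ‖θ‖ ^ 2 + α ^ 2 := by
    have := WithLp.prod_norm_sq_eq_of_L2 z
    rw [this]
    have hfz : z.fst = θ := rfl
    have hsz : ‖z.snd‖ = |α| := rfl
    rw [hfz, hsz, sq_abs]
  have hd := hdiss α
  have hdivc : c * (2 * C ^ 2 / c) = 2 * C ^ 2 := by field_simp
  have hcη₁ : c ≤ η₁ := min_le_left _ _
  have hcη₂ : c ≤ η₂ * aι := min_le_right _ _
  clear_value θ α Lfst Lsnd C c
  have key : C * ‖z‖ ≤ c / 2 * ‖z‖ ^ 2 + 2 * C ^ 2 / c := by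
    rw [← mul_le_mul_iff_of_pos_left hc, mul_add, hdivc]
    nlinarith [sq_nonneg (c * ‖z‖ - C), sq_nonneg C]
  have h3 : η₂ * (aι * α ^ 2 - bι) ≤ η₂ * (α * Real.log (Real.cosh α) * Real.tanh α) :=
    mul_le_mul_of_nonneg_left hd hη₂.le
  have h4 : c * ‖θ‖ ^ 2 ≤ η₁ * ‖θ‖ ^ 2 :=
    mul_le_mul_of_nonneg_right hcη₁ (sq_nonneg ‖θ‖)
  have h5 : c * α ^ 2 ≤ η₂ * aι * α ^ 2 :=
    mul_le_mul_of_nonneg_right hcη₂ (sq_nonneg α)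
  have h6 : c * ‖z‖ ^ 2 = c * ‖θ‖ ^ 2 + c * α ^ 2 := by rw [hnorm]; ring
  linarith [key, hDV, h3, h4, h5, h6]
end
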